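/- Let (T, β) be a regular self-affine structure on ℝ^d satisfying the assumptions of the main fractal-dimension theorem with parameters {ρ_n}, {C_n}, {L_n^{(j)}} and index 1 ≤ ℓ < d. Let κ ∈ T_n, and let U be an open subset of ℝ^d intersecting the fractal F(T,β) with U ∩ F(T,β) ⊆ β(κ), n = n(U), and diam(U) ≥ ρ_{n+1} L_n^{(1)}. Then there is a family S of elementary squares of β(κ) (closed cubes contained in β(κ) of side length L_n^{(1)}) such that (1) ⋃_{S∈S} S ⊇ U ∩ F(T,β), and (2) (L_n^{(1)})^t · #S ≤ 2^{d−ℓ} ρ_{n+1}^{−t} diam(U)^t for all t ≥ d − ℓ. -/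

import Mathlib

open Filter

/-- The rectangle `β(τ)` of the self-affine structure: a box with lower corner
`corner τ` and side lengths `L (height τ) j` in coordinate `j` (sides indexed `1,…,d`). -/
def βdef (d : ℕ) (corner : List ℕ → Fin d → ℝ) (L : ℕ → ℕ → ℝ) (τ : List ℕ) :
    Set (EuclideanSpace ℝ (Fin d)) :=
  {x | ∀ i : Fin d, corner τ i ≤ x i ∧ x i ≤ corner τ i + L τ.length ((i : ℕ) + 1)}

/-- The fractal `F(T,β) = ⋃_{rays σ} ⋂_n β(σ|_n)`. -/
def fractal (d : ℕ) (T : Set (List ℕ)) (β : List ℕ → Set (EuclideanSpace ℝ (Fin d))) :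
    Set (EuclideanSpace ℝ (Fin d)) :=
  ⋃ σ ∈ {σ : ℕ → ℕ | ∀ n, (List.ofFn fun i : Fin n => σ i) ∈ T},
    ⋂ n, β (List.ofFn fun i : Fin n => σ i)

open Set Metric

/-! The set `U ∩ F(T,β)` lies in `β(κ)` and has diameter at most `D = diam U`, so in every
coordinate its projection lies in an interval of length `D`. In each of the `d - ℓ` long
directions this interval is covered by `M = ⌈D / (ρ_{n+1} L)⌉` consecutive intervals of
length `L = L_n^{(1)}`, pushed back into the side of `β(κ)` where they stick out; in the `ℓ`
short directions the side of `β(κ)` is itself one such interval. Products of these intervals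
are elementary squares, there are at most `M ^ (d - ℓ)` of them, and `⌈x⌉ ≤ 2x` for `x ≥ 1`
gives the bound. -/

def box {d : ℕ} (c side : Fin d → ℝ) : Set (EuclideanSpace ℝ (Fin d)) :=
  {x | ∀ i, x i ∈ Icc (c i) (c i + side i)}

lemma exists_lt_mem_Icc_add_mul {a δ x : ℝ} {m : ℕ} (hm : 0 < m)
    (hx : x ∈ Icc a (a + m * δ)) : ∃ k < m, x ∈ Icc (a + k * δ) (a + (k + 1) * δ) := by
  induction m, hm using Nat.le_induction with
  | base => exact ⟨0, one_pos, by simpa using hx⟩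
  | succ m _ ih =>
    by_cases hxm : x ≤ a + m * δ
    · obtain ⟨k, hk, hxk⟩ := ih ⟨hx.1, hxm⟩
      exact ⟨k, hk.trans m.lt_succ_self, hxk⟩
    · exact ⟨m, m.lt_succ_self, (not_le.1 hxm).le, by simpa using hx.2⟩

lemma exists_finset_Icc_cover {c ℓ a δ : ℝ} {m : ℕ} (hδℓ : δ ≤ ℓ) (hm : 0 < m) :
    ∃ P : Finset ℝ, P.card ≤ m ∧ (∀ p ∈ P, Icc p (p + δ) ⊆ Icc c (c + ℓ)) ∧
      Icc c (c + ℓ) ∩ Icc a (a + m * δ) ⊆ ⋃ p ∈ P, Icc p (p + δ) := by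
  -- the `k`-th cell `[a + kδ, a + (k+1)δ]` of the grid, clamped into `[c, c + ℓ]`
  let p : ℕ → ℝ := fun k => max c (min (a + k * δ) (c + ℓ - δ))
  refine ⟨(Finset.range m).image p, Finset.card_image_le.trans (Finset.card_range m).le,
    ?_, ?_⟩
  · simp only [Finset.mem_image, Finset.mem_range, forall_exists_index, and_imp]
    rintro _ k _ rfl
    have hpc : p k ≤ c + ℓ - δ := max_le (by linarith) (min_le_right _ _)
    exact Icc_subset_Icc (le_max_left _ _) (by linarith)
  · rintro x ⟨hxc, hxa⟩
    obtain ⟨k, hk, hxk⟩ := exists_lt_mem_Icc_add_mul hm hxa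
    refine mem_iUnion₂.2 ⟨p k, Finset.mem_image_of_mem p (Finset.mem_range.2 hk), ?_, ?_⟩
    · exact max_le hxc.1 ((min_le_left _ _).trans hxk.1)
    · have : x - δ ≤ min (a + k * δ) (c + ℓ - δ) :=
        le_min (by linarith [hxk.2]) (by linarith [hxc.2])
      linarith [le_max_right c (min (a + k * δ) (c + ℓ - δ))]

lemma exists_finset_box_cover {d : ℕ} {s : Set (EuclideanSpace ℝ (Fin d))}
    {c side a : Fin d → ℝ} {δ : ℝ} {m : Fin d → ℕ} (hside : ∀ i, δ ≤ side i)
    (hm : ∀ i, 0 < m i) (hsc : s ⊆ box c side) (hsa : s ⊆ box a fun i => m i * δ) :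
    ∃ P : Finset (Fin d → ℝ), P.card ≤ ∏ i, m i ∧
      (∀ p ∈ P, box p (fun _ => δ) ⊆ box c side) ∧ s ⊆ ⋃ p ∈ P, box p fun _ => δ := by
  choose P hPcard hPsub hPcover using
    fun i => exists_finset_Icc_cover (c := c i) (a := a i) (hside i) (hm i)
  refine ⟨Fintype.piFinset P, ?_, ?_, ?_⟩
  · rw [Fintype.card_piFinset]
    exact Finset.prod_le_prod' fun i _ => hPcard i
  · intro p hp x hx i
    exact hPsub i (p i) (Fintype.mem_piFinset.1 hp i) (hx i)
  · intro x hx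
    have : ∀ i, ∃ q ∈ P i, x i ∈ Icc q (q + δ) := fun i =>
      by simpa only [mem_iUnion₂, exists_prop] using hPcover i ⟨hsc hx i, hsa hx i⟩
    choose q hq hxq using this
    exact mem_iUnion₂.2 ⟨q, Fintype.mem_piFinset.2 hq, hxq⟩

lemma exists_subset_box_diam {d : ℕ} {s : Set (EuclideanSpace ℝ (Fin d))}
    (hs : Bornology.IsBounded s) : ∃ a : Fin d → ℝ, s ⊆ box a fun _ => diam s := by
  have hbdd (i : Fin d) : BddBelow ((fun x : EuclideanSpace ℝ (Fin d) => x i) '' s) :=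
    ((EuclideanSpace.proj (𝕜 := ℝ) i).lipschitz.isBounded_image hs).bddBelow
  refine ⟨fun i => sInf ((fun x => x i) '' s),
    fun x hx i => ⟨csInf_le (hbdd i) ⟨x, hx, rfl⟩, ?_⟩⟩
  rw [← sub_le_iff_le_add]
  refine le_csInf ⟨_, x, hx, rfl⟩ ?_
  rintro _ ⟨y, hy, rfl⟩
  have hxy : dist (x i) (y i) ≤ diam s :=
    (PiLp.dist_apply_le x y i).trans (dist_le_diam_of_mem hs hx hy)
  rw [Real.dist_eq] at hxy
  linarith [le_abs_self (x i - y i)]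

lemma apply_one_le_of_sorted {L : ℕ → ℝ} {d ℓ : ℕ} (hshort : ∀ j, 1 ≤ j → j ≤ ℓ → L j = L 1)
    (hstep : L 1 ≤ L (ℓ + 1)) (hlong : ∀ j, ℓ + 1 ≤ j → j < d → L j ≤ L (j + 1))
    {j : ℕ} (hj : 1 ≤ j) (hjd : j ≤ d) : L 1 ≤ L j := by
  rcases le_or_gt j ℓ with h | h
  · exact (hshort j hj h).ge
  · have hmono : MonotoneOn L (Icc (ℓ + 1) d) :=
      monotoneOn_of_le_succ ordConnected_Icc fun k _ hk hk' => by
        rw [Order.succ_eq_add_one] at hk' ⊢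
        exact hlong k hk.1 (by linarith [hk'.2])
    exact hstep.trans (hmono ⟨le_rfl, by omega⟩ ⟨h, hjd⟩ h)

lemma prod_ite_lt_eq_pow (d ℓ M : ℕ) :
    ∏ i : Fin d, (if (i : ℕ) < ℓ then 1 else M) = M ^ (d - ℓ) := by
  rw [Fin.prod_univ_eq_prod_range (fun i => if i < ℓ then 1 else M), Finset.prod_ite,
    Finset.prod_const_one, one_mul, Finset.prod_const, ← Nat.card_Ico ℓ d]
  congr 2
  ext i
  simp only [not_lt, Finset.mem_filter, Finset.mem_range, Finset.mem_Ico]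
  omega

lemma le_natCeil_div_mul_mul {D r δ : ℝ} (hD : 0 ≤ D) (hr : 0 < r) (hr1 : r ≤ 1)
    (hδ : 0 < δ) : D ≤ ⌈D / (r * δ)⌉₊ * δ :=
  calc D ≤ D / r := le_div_self hD hr hr1
    _ = D / (r * δ) * δ := by field_simp
    _ ≤ ⌈D / (r * δ)⌉₊ * δ := by gcongr; exact Nat.le_ceil _

lemma natCeil_pow_le_two_pow_mul_rpow {x t : ℝ} {k : ℕ} (hx : 1 ≤ x) (hkt : k ≤ t) :
    (⌈x⌉₊ : ℝ) ^ k ≤ 2 ^ k * x ^ t :=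
  calc (⌈x⌉₊ : ℝ) ^ k ≤ (2 * x) ^ k :=
        pow_le_pow_left₀ (by positivity) (Nat.ceil_le_two_mul (by linarith)) k
    _ = 2 ^ k * x ^ (k : ℝ) := by rw [mul_pow, Real.rpow_natCast]
    _ ≤ 2 ^ k * x ^ t := by gcongr

lemma rpow_mul_natCeil_pow_le {δ r D t : ℝ} {k : ℕ} (hδ : 0 < δ) (hr : 0 < r)
    (hrD : r * δ ≤ D) (hkt : k ≤ t) :
    δ ^ t * (⌈D / (r * δ)⌉₊ : ℝ) ^ k ≤ 2 ^ k * r ^ (-t) * D ^ t := by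
  have hD : 0 < D := (mul_pos hr hδ).trans_le hrD
  calc δ ^ t * (⌈D / (r * δ)⌉₊ : ℝ) ^ k ≤ δ ^ t * (2 ^ k * (D / (r * δ)) ^ t) := by
        gcongr
        exact natCeil_pow_le_two_pow_mul_rpow ((one_le_div (by positivity)).2 hrD) hkt
    _ = 2 ^ k * r ^ (-t) * D ^ t := by
        rw [Real.div_rpow hD.le (by positivity), Real.mul_rpow hr.le hδ.le, Real.rpow_neg hr.le]
        field_simp

theorem stmt8_general (d ℓ : ℕ) (hld : ℓ < d)
    (T : Set (List ℕ)) (corner : List ℕ → Fin d → ℝ) (L : ℕ → ℕ → ℝ) (ρ : ℕ → ℝ)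
    (hLpos : ∀ n j, 1 ≤ j → j ≤ d → 0 < L n j)
    (hLeq : ∀ n j, 1 ≤ j → j ≤ ℓ → L n j = L n 1)
    (hLlt : ∀ n, L n 1 < L n (ℓ + 1))
    (hLord : ∀ n j, ℓ + 1 ≤ j → j < d → L n j ≤ L n (j + 1))
    (hρ : ∀ n, 0 < ρ n ∧ ρ n ≤ 1)
    (n : ℕ) (κ : List ℕ) (hκn : κ.length = n)
    (U : Set (EuclideanSpace ℝ (Fin d)))
    (hUβ : U ∩ fractal d T (βdef d corner L) ⊆ βdef d corner L κ)
    (hdiam : ρ (n + 1) * L n 1 ≤ Metric.diam U) :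
    ∃ 𝒮 : Finset (Fin d → ℝ),
      (∀ c ∈ 𝒮, {x : EuclideanSpace ℝ (Fin d) | ∀ i, c i ≤ x i ∧ x i ≤ c i + L n 1}
          ⊆ βdef d corner L κ) ∧
      (U ∩ fractal d T (βdef d corner L) ⊆
        ⋃ c ∈ 𝒮, {x : EuclideanSpace ℝ (Fin d) | ∀ i, c i ≤ x i ∧ x i ≤ c i + L n 1}) ∧
      ∀ t : ℝ, (d : ℝ) - ℓ ≤ t →
        L n 1 ^ t * (𝒮.card : ℝ) ≤
          2 ^ (d - ℓ) * ρ (n + 1) ^ (-t) * Metric.diam U ^ t := by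
  set F := fractal d T (βdef d corner L)
  set Lv := L n 1
  set M := ⌈diam U / (ρ (n + 1) * Lv)⌉₊
  have hLv : 0 < Lv := hLpos n 1 le_rfl (by omega)
  have hρn := hρ (n + 1)
  have hUpos : 0 < diam U := (mul_pos hρn.1 hLv).trans_le hdiam
  have hM : 0 < M := Nat.ceil_pos.2 (div_pos hUpos (mul_pos hρn.1 hLv))
  have hUbdd : Bornology.IsBounded U := by_contra fun h => hUpos.ne' (diam_eq_zero_of_unbounded h)
  have hUFκ : U ∩ F ⊆ box (corner κ) fun i => L n (i + 1) := by subst hκn; exact hUβ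
  obtain ⟨a, ha⟩ := exists_subset_box_diam (hUbdd.subset inter_subset_left)
  have hdiamUF : diam (U ∩ F) ≤ M * Lv := (diam_mono inter_subset_left hUbdd).trans
    (le_natCeil_div_mul_mul hUpos.le hρn.1 hρn.2 hLv)
  -- short directions: the side of `β(κ)`; long directions: `M` cells from the bounding box
  let m : Fin d → ℕ := fun i => if (i : ℕ) < ℓ then 1 else M
  have hUFa : U ∩ F ⊆ box (fun i => if (i : ℕ) < ℓ then corner κ i else a i)
      fun i => m i * Lv := by
    intro x hx i
    by_cases hi : (i : ℕ) < ℓ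
    · simpa [m, hi, hLeq n (i + 1) (by omega) hi] using hUFκ hx i
    · simp only [m, hi, if_false]
      exact ⟨(ha hx i).1, (ha hx i).2.trans (by linarith)⟩
  obtain ⟨P, hPcard, hPsub, hPcover⟩ := exists_finset_box_cover
    (fun i => apply_one_le_of_sorted (hLeq n) (hLlt n).le (hLord n) (by omega) (by omega))
    (fun i => by dsimp only [m]; split_ifs <;> omega) hUFκ hUFa
  refine ⟨P, fun c hc => by subst hκn; exact hPsub c hc, hPcover, fun t ht => ?_⟩
  have hcard : P.card ≤ M ^ (d - ℓ) := prod_ite_lt_eq_pow d ℓ M ▸ hPcard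
  calc Lv ^ t * (P.card : ℝ) ≤ Lv ^ t * (M : ℝ) ^ (d - ℓ) := by gcongr; exact_mod_cast hcard
    _ ≤ 2 ^ (d - ℓ) * ρ (n + 1) ^ (-t) * diam U ^ t :=
      rpow_mul_natCeil_pow_le hLv hρn.1 hdiam (by rwa [Nat.cast_sub hld.le])

/-- existence of an efficient cover of `U ∩ F(T,β)` by elementary squares
(closed cubes of side `L n 1` contained in `β(κ)`). -/
theorem stmt8 (d ℓ : ℕ) (hl1 : 1 ≤ ℓ) (hld : ℓ < d)
    (T : Set (List ℕ)) (corner : List ℕ → Fin d → ℝ) (L : ℕ → ℕ → ℝ) (ρ : ℕ → ℝ)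
    (hLpos : ∀ n j, 1 ≤ j → j ≤ d → 0 < L n j)
    (hLdec : ∀ n j, 1 ≤ j → j ≤ d → L (n + 1) j ≤ L n j)
    (hLeq : ∀ n j, 1 ≤ j → j ≤ ℓ → L n j = L n 1)
    (hLlt : ∀ n, L n 1 < L n (ℓ + 1))
    (hLord : ∀ n j, ℓ + 1 ≤ j → j < d → L n j ≤ L n (j + 1))
    (hρ : ∀ n, 0 < ρ n ∧ ρ n ≤ 1)
    (n : ℕ) (κ : List ℕ) (hκ : κ ∈ T) (hκn : κ.length = n)
    (U : Set (EuclideanSpace ℝ (Fin d))) (hU : IsOpen U)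
    (hUF : (U ∩ fractal d T (βdef d corner L)).Nonempty)
    (hUβ : U ∩ fractal d T (βdef d corner L) ⊆ βdef d corner L κ)
    (hdiam : ρ (n + 1) * L n 1 ≤ Metric.diam U) :
    ∃ 𝒮 : Finset (Fin d → ℝ),
      (∀ c ∈ 𝒮, {x : EuclideanSpace ℝ (Fin d) | ∀ i, c i ≤ x i ∧ x i ≤ c i + L n 1}
          ⊆ βdef d corner L κ) ∧
      (U ∩ fractal d T (βdef d corner L) ⊆
        ⋃ c ∈ 𝒮, {x : EuclideanSpace ℝ (Fin d) | ∀ i, c i ≤ x i ∧ x i ≤ c i + L n 1}) ∧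
      ∀ t : ℝ, (d : ℝ) - ℓ ≤ t →
        L n 1 ^ t * (𝒮.card : ℝ) ≤
          2 ^ (d - ℓ) * ρ (n + 1) ^ (-t) * Metric.diam U ^ t :=
  stmt8_general d ℓ hld T corner L ρ hLpos hLeq hLlt hLord hρ n κ hκn U hUβ hdiam
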